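/- If the gradients ∇_λ V_λ(s) are uniformly bounded over states, then under the soft Bellman recursion ∇_λ V_λ(s) = Σ_{s',a} ρ^{π_λ, s}(s',a) ∇_λ R_λ(s',a), where ρ^{π_λ, s} is the discounted state-action occupancy measure of the softmax policy started at state s. -/

import Mathlib

open Filter Topology Finset Matrix

/-!
Differentiating the soft Bellman equation, the derivative of log-sum-exp is the softmax average
of the derivatives, so the value gradients `G s = ∇V(s)` solve the policy-evaluation equation
`G = b + γ P G`, where `b s = Σₐ π(s,a) ∇R(s,a)` and `P` is the transition matrix of the softmax
policy. Unrolling it `n` steps along the chain started at `s₀` gives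
`G s₀ = Σ_{τ<n} γ^τ E[b(s_τ)] + γ^n E[G(s_n)]`; the remainder vanishes because `G` is bounded on
the finite state space and `γ < 1`, and the series regroups into occupancy weights.
-/

noncomputable def softmax {ι : Type*} [Fintype ι] (q : ι → ℝ) (i : ι) : ℝ :=
  Real.exp (q i) / ∑ j, Real.exp (q j)

section Softmax

variable {ι : Type*} [Fintype ι] [Nonempty ι]

lemma sum_exp_pos (q : ι → ℝ) : 0 < ∑ j, Real.exp (q j) :=
  Finset.sum_pos (fun j _ => Real.exp_pos (q j)) univ_nonempty

lemma softmax_mem_stdSimplex (q : ι → ℝ) : softmax q ∈ stdSimplex ℝ ι := by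
  refine ⟨fun i => div_nonneg (Real.exp_pos _).le (sum_exp_pos q).le, ?_⟩
  simp only [softmax, ← Finset.sum_div, div_self (sum_exp_pos q).ne']

theorem HasFDerivAt.log_sum_exp {E : Type*} [NormedAddCommGroup E] [NormedSpace ℝ E]
    {f : ι → E → ℝ} {f' : ι → E →L[ℝ] ℝ} {x : E} (hf : ∀ i, HasFDerivAt (f i) (f' i) x) :
    HasFDerivAt (fun y => Real.log (∑ i, Real.exp (f i y)))
      (∑ i, softmax (fun i => f i x) i • f' i) x := by
  have h := (HasFDerivAt.fun_sum fun i _ => (hf i).exp).log (sum_exp_pos fun i => f i x).ne'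
  convert h using 1
  simp only [Finset.smul_sum, smul_smul, softmax, div_eq_inv_mul]

end Softmax

section MarkovChain

variable {S : Type*} [Fintype S]

lemma vecMul_mem_stdSimplex [DecidableEq S] {M : Matrix S S ℝ} (hM : M ∈ rowStochastic ℝ S)
    {x : S → ℝ} (hx : x ∈ stdSimplex ℝ S) : x ᵥ* M ∈ stdSimplex ℝ S := by
  refine ⟨nonneg_vecMul_of_mem_rowStochastic hM hx.1, ?_⟩
  have h := vecMul_dotProduct_one_eq_one_rowStochastic hM (by rw [dotProduct_one, hx.2])
  rwa [dotProduct_one] at h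

lemma of_sum_mul_mem_rowStochastic [DecidableEq S] {A : Type*} [Fintype A] {π : S → A → ℝ}
    (hπ : ∀ s, π s ∈ stdSimplex ℝ A) {T : S → A → S → ℝ} (hT : ∀ s a, T s a ∈ stdSimplex ℝ S) :
    Matrix.of (fun s s' => ∑ a, π s a * T s a s') ∈ rowStochastic ℝ S := by
  refine mem_rowStochastic_iff_sum.2 ⟨fun s s' => ?_, fun s => ?_⟩
  · exact Finset.sum_nonneg fun a _ => mul_nonneg ((hπ s).1 a) ((hT s a).1 s')
  · simp only [of_apply]
    rw [Finset.sum_comm]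
    simp only [← Finset.mul_sum, (hT _ _).2, mul_one, (hπ s).2]

variable {E : Type*} [NormedAddCommGroup E] [NormedSpace ℝ E]

lemma sum_smul_sum_smul_eq_vecMul (M : Matrix S S ℝ) (x : S → ℝ) (G : S → E) :
    ∑ s, x s • ∑ s', M s s' • G s' = ∑ s', (x ᵥ* M) s' • G s' := by
  simp only [Finset.smul_sum, smul_smul, vecMul, dotProduct, Finset.sum_smul]
  exact Finset.sum_comm

lemma norm_sum_smul_le_of_mem_stdSimplex {x : S → ℝ} (hx : x ∈ stdSimplex ℝ S) (G : S → E) :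
    ‖∑ s, x s • G s‖ ≤ ∑ s, ‖G s‖ := by
  refine (norm_sum_le _ _).trans (Finset.sum_le_sum fun s _ => ?_)
  rw [norm_smul, Real.norm_of_nonneg (hx.1 s)]
  exact mul_le_of_le_one_left (norm_nonneg _) (mem_Icc_of_mem_stdSimplex hx s).2

variable {γ : ℝ} {M : Matrix S S ℝ} {p : ℕ → S → ℝ} {G b : S → E}

lemma sum_smul_eq_sum_range_add_pow_smul (hp : ∀ τ, p (τ + 1) = p τ ᵥ* M)
    (hG : ∀ s, G s = b s + γ • ∑ s', M s s' • G s') (n : ℕ) :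
    ∑ s, p 0 s • G s
      = ∑ τ ∈ range n, γ ^ τ • ∑ s, p τ s • b s + γ ^ n • ∑ s, p n s • G s := by
  induction n with
  | zero => simp
  | succ n ih =>
    have hstep : ∑ s, p n s • G s = ∑ s, p n s • b s + γ • ∑ s, p (n + 1) s • G s := by
      conv_lhs => rw [Finset.sum_congr rfl fun s _ => congrArg (p n s • ·) (hG s)]
      rw [hp, ← sum_smul_sum_smul_eq_vecMul, Finset.smul_sum]
      simp only [smul_add, Finset.sum_add_distrib, smul_comm γ]
    rw [ih, hstep, sum_range_succ, smul_add, pow_succ, mul_smul, add_assoc]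

theorem sum_smul_eq_sum_tsum_smul [DecidableEq S] (hγ0 : 0 ≤ γ) (hγ1 : γ < 1)
    (hM : M ∈ rowStochastic ℝ S) (hp0 : p 0 ∈ stdSimplex ℝ S) (hp : ∀ τ, p (τ + 1) = p τ ᵥ* M)
    (hG : ∀ s, G s = b s + γ • ∑ s', M s s' • G s') :
    ∑ s, p 0 s • G s = ∑ s, (∑' τ, γ ^ τ * p τ s) • b s := by
  have hpτ : ∀ τ, p τ ∈ stdSimplex ℝ S := fun τ => by
    induction τ with
    | zero => exact hp0
    | succ τ ih => exact hp τ ▸ vecMul_mem_stdSimplex hM ih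
  have hrem : Tendsto (fun n => γ ^ n • ∑ s, p n s • G s) atTop (𝓝 0) := by
    refine squeeze_zero_norm (fun n => ?_) (by
      simpa using (tendsto_pow_atTop_nhds_zero_of_lt_one hγ0 hγ1).mul_const (∑ s, ‖G s‖))
    rw [norm_smul, Real.norm_of_nonneg (pow_nonneg hγ0 n)]
    exact mul_le_mul_of_nonneg_left (norm_sum_smul_le_of_mem_stdSimplex (hpτ n) G)
      (pow_nonneg hγ0 n)
  have hpartial : Tendsto (fun n => ∑ τ ∈ range n, γ ^ τ • ∑ s, p τ s • b s) atTop
      (𝓝 (∑ s, p 0 s • G s)) := by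
    have h := (hrem.const_sub (∑ s, p 0 s • G s))
    rw [sub_zero] at h
    refine h.congr fun n => ?_
    rw [sum_smul_eq_sum_range_add_pow_smul hp hG n, add_sub_cancel_right]
  have hsum : HasSum (fun τ => γ ^ τ • ∑ s, p τ s • b s)
      (∑ s, (∑' τ, γ ^ τ * p τ s) • b s) := by
    have hsummable : ∀ s, Summable fun τ => γ ^ τ * p τ s := fun s =>
      (summable_geometric_of_lt_one hγ0 hγ1).of_nonneg_of_le
        (fun τ => mul_nonneg (pow_nonneg hγ0 τ) ((hpτ τ).1 s))
        (fun τ => mul_le_of_le_one_right (pow_nonneg hγ0 τ)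
          (mem_Icc_of_mem_stdSimplex (hpτ τ) s).2)
    convert hasSum_sum fun s _ => (hsummable s).hasSum.smul_const (b s) using 1
    ext τ
    simp only [Finset.smul_sum, smul_smul]
  exact tendsto_nhds_unique hpartial hsum.tendsto_sum_nat

end MarkovChain

section SoftBellman

variable {S A E : Type*} [Fintype S] [Fintype A] [NormedAddCommGroup E] [NormedSpace ℝ E]

lemma sum_smul_add_smul_sum_smul (π : A → ℝ) (D : A → E) (γ : ℝ) (T : A → S → ℝ) (G : S → E) :
    ∑ a, π a • (D a + γ • ∑ s', T a s' • G s')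
      = ∑ a, π a • D a + γ • ∑ s', (∑ a, π a * T a s') • G s' := by
  simp only [smul_add, Finset.sum_add_distrib, Finset.smul_sum, smul_smul, Finset.sum_smul]
  rw [Finset.sum_comm]
  simp only [mul_left_comm]

theorem fderiv_value_of_softBellman [Nonempty A] (γ : ℝ) (T : S → A → S → ℝ)
    (R Q : E → S → A → ℝ) (V : E → S → ℝ) (l : E)
    (hR : ∀ s a, DifferentiableAt ℝ (fun l' => R l' s a) l)
    (hV : ∀ s, DifferentiableAt ℝ (fun l' => V l' s) l)
    (hQ : ∀ l' s a, Q l' s a = R l' s a + γ * ∑ s', T s a s' * V l' s')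
    (hVdef : ∀ l' s, V l' s = Real.log (∑ a, Real.exp (Q l' s a))) (s : S) :
    fderiv ℝ (fun l' => V l' s) l
      = ∑ a, softmax (Q l s) a • (fderiv ℝ (fun l' => R l' s a) l
          + γ • ∑ s', T s a s' • fderiv ℝ (fun l' => V l' s') l) := by
  have hQderiv : ∀ a, HasFDerivAt (fun l' => Q l' s a) (fderiv ℝ (fun l' => R l' s a) l
      + γ • ∑ s', T s a s' • fderiv ℝ (fun l' => V l' s') l) l := fun a => by
    rw [show (fun l' => Q l' s a) = _ from funext fun l' => hQ l' s a]
    exact (hR s a).hasFDerivAt.add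
      ((HasFDerivAt.fun_sum fun s' _ => (hV s').hasFDerivAt.const_mul (T s a s')).const_mul γ)
  rw [show (fun l' => V l' s) = _ from funext fun l' => hVdef l' s]
  exact (HasFDerivAt.log_sum_exp hQderiv).fderiv

end SoftBellman

theorem soft_value_gradient_occupancy_general {d : ℕ} {S A : Type} [Fintype S] [Fintype A]
    [Nonempty A] [DecidableEq S]
    (γ : ℝ) (hγ0 : 0 ≤ γ) (hγ1 : γ < 1)
    (T : S → A → S → ℝ) (hT : ∀ s a s', 0 ≤ T s a s')
    (hTsum : ∀ s a, ∑ s', T s a s' = 1)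
    (R Q : (Fin d → ℝ) → S → A → ℝ) (V : (Fin d → ℝ) → S → ℝ)
    (hR : ∀ s a, Differentiable ℝ (fun l => R l s a))
    (hV : ∀ s, Differentiable ℝ (fun l => V l s))
    (l : Fin d → ℝ)
    (hQ : ∀ l' s a, Q l' s a = R l' s a + γ * ∑ s', T s a s' * V l' s')
    (hVdef : ∀ l' s, V l' s = Real.log (∑ a, Real.exp (Q l' s a)))
    (pol : S → A → ℝ)
    (hpol : ∀ s a, pol s a = Real.exp (Q l s a) / ∑ a', Real.exp (Q l s a'))
    (PL : S → ℕ → S → ℝ)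
    (hPL0 : ∀ s0 s, PL s0 0 s = if s = s0 then 1 else 0)
    (hPLrec : ∀ s0 τ s', PL s0 (τ + 1) s' = ∑ s, ∑ a, PL s0 τ s * pol s a * T s a s')
    (s0 : S) :
    fderiv ℝ (fun l' => V l' s0) l
      = ∑ s', ∑ a,
          (∑' τ : ℕ, γ ^ τ * (PL s0 τ s' * pol s' a)) •
            fderiv ℝ (fun l' => R l' s' a) l := by
  set M : Matrix S S ℝ := Matrix.of fun s s' => ∑ a, pol s a * T s a s'
  have hpol_softmax : ∀ s, pol s = softmax (Q l s) := fun s => funext (hpol s)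
  have hM : M ∈ rowStochastic ℝ S := of_sum_mul_mem_rowStochastic
    (fun s => hpol_softmax s ▸ softmax_mem_stdSimplex _) (fun s a => ⟨hT s a, hTsum s a⟩)
  have hG : ∀ s, fderiv ℝ (fun l' => V l' s) l
      = ∑ a, pol s a • fderiv ℝ (fun l' => R l' s a) l
        + γ • ∑ s', M s s' • fderiv ℝ (fun l' => V l' s') l := fun s => by
    rw [fderiv_value_of_softBellman γ T R Q V l (fun s a => hR s a l) (fun s => hV s l) hQ hVdef,
      ← hpol_softmax]
    exact sum_smul_add_smul_sum_smul (pol s) _ γ (T s) _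
  have hp0 : PL s0 0 ∈ stdSimplex ℝ S :=
    ⟨fun s => by rw [hPL0]; split_ifs <;> norm_num, by simp [hPL0]⟩
  have hp : ∀ τ, PL s0 (τ + 1) = PL s0 τ ᵥ* M := fun τ => funext fun s' => by
    simp only [hPLrec, vecMul, dotProduct, M, of_apply, Finset.mul_sum, mul_assoc]
  have hocc := sum_smul_eq_sum_tsum_smul hγ0 hγ1 hM hp0 hp hG
  simp only [hPL0, ite_smul, one_smul, zero_smul, Finset.sum_ite_eq', Finset.mem_univ,
    if_true] at hocc
  simp only [hocc, Finset.smul_sum, smul_smul, ← mul_assoc, tsum_mul_right]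

/-- With uniformly bounded value gradients, the soft value gradient equals the
occupancy-weighted sum of reward gradients:
`∇V(s₀) = Σ_{s',a} ρ^{π_λ,s₀}(s',a) ∇R(s',a)`. -/
theorem soft_value_gradient_occupancy {d : ℕ} {S A : Type} [Fintype S] [Fintype A]
    [Nonempty S] [Nonempty A] [DecidableEq S] [DecidableEq A]
    (γ : ℝ) (hγ0 : 0 ≤ γ) (hγ1 : γ < 1)
    (T : S → A → S → ℝ) (hT : ∀ s a s', 0 ≤ T s a s')
    (hTsum : ∀ s a, ∑ s', T s a s' = 1)
    (R Q : (Fin d → ℝ) → S → A → ℝ) (V : (Fin d → ℝ) → S → ℝ)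
    (hR : ∀ s a, Differentiable ℝ (fun l => R l s a))
    (hV : ∀ s, Differentiable ℝ (fun l => V l s))
    (l : Fin d → ℝ)
    (hbound : ∃ C, ∀ s, ‖fderiv ℝ (fun l' => V l' s) l‖ ≤ C)
    (hQ : ∀ l' s a, Q l' s a = R l' s a + γ * ∑ s', T s a s' * V l' s')
    (hVdef : ∀ l' s, V l' s = Real.log (∑ a, Real.exp (Q l' s a)))
    (pol : S → A → ℝ)
    (hpol : ∀ s a, pol s a = Real.exp (Q l s a) / ∑ a', Real.exp (Q l s a'))
    (PL : S → ℕ → S → ℝ)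
    (hPL0 : ∀ s0 s, PL s0 0 s = if s = s0 then 1 else 0)
    (hPLrec : ∀ s0 τ s', PL s0 (τ + 1) s' = ∑ s, ∑ a, PL s0 τ s * pol s a * T s a s')
    (s0 : S) :
    fderiv ℝ (fun l' => V l' s0) l
      = ∑ s', ∑ a,
          (∑' τ : ℕ, γ ^ τ * (PL s0 τ s' * pol s' a)) •
            fderiv ℝ (fun l' => R l' s' a) l :=
  soft_value_gradient_occupancy_general γ hγ0 hγ1 T hT hTsum R Q V hR hV l hQ hVdef pol hpol PL hPL0
    hPLrec s0
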